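/- Corollary 2 (substructural generation of vorticity in Korteweg fluids): For a steady flow of a Korteweg fluid satisfying the steady momentum balance ρ (Dv)v = div T with T = −p̄ I − T^E, if the entropy η and the total enthalpy h are constant throughout B, then at every point of B: ω × v = −grad(ι² div(ρ ∂_gφ) + ∂_gφ·grad ι) + ι grad(v·grad Π − ∂_ιχ). -/

import Mathlib

noncomputable section

/-- Points of ℝ³. -/
abbrev V3 : Type := Fin 3 → ℝ

/-- Partial derivative ∂ᵢ of a scalar field on ℝ³. -/
def pd (i : Fin 3) (f : V3 → ℝ) (x : V3) : ℝ :=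
  fderiv ℝ f x (Pi.single i 1)

/-- Cross product on ℝ³. -/
def cross (a b : V3) : V3 :=
  ![a 1 * b 2 - a 2 * b 1,
    a 2 * b 0 - a 0 * b 2,
    a 0 * b 1 - a 1 * b 0]

/-- Curl of a vector field on ℝ³. -/
def curl (u : V3 → V3) (x : V3) : V3 :=
  ![pd 1 (fun y => u y 2) x - pd 2 (fun y => u y 1) x,
    pd 2 (fun y => u y 0) x - pd 0 (fun y => u y 2) x,
    pd 0 (fun y => u y 1) x - pd 1 (fun y => u y 0) x]

/-- A steady Korteweg fluid on an open set `B ⊆ ℝ³`: smooth fields `ρ > 0`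
(mass density), `η` (entropy), `v` (velocity), a smooth potential
`φ = φ(ι, g, η)` and a smooth kinetic co-energy `χ = χ(ι, ι̇)`. -/
structure KortewegFluid where
  B : Set V3
  hB : IsOpen B
  ρ : V3 → ℝ
  η : V3 → ℝ
  v : V3 → V3
  φ : ℝ × V3 × ℝ → ℝ
  χ : ℝ × ℝ → ℝ
  hρ : ContDiffOn ℝ (⊤ : ℕ∞) ρ B
  hη : ContDiffOn ℝ (⊤ : ℕ∞) η B
  hv : ContDiffOn ℝ (⊤ : ℕ∞) v B
  hφ : ContDiff ℝ (⊤ : ℕ∞) φ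
  hχ : ContDiff ℝ (⊤ : ℕ∞) χ
  hρpos : ∀ x ∈ B, 0 < ρ x

namespace KortewegFluid

variable (K : KortewegFluid)

/-- Specific volume `ι = 1/ρ`. -/
def ι (x : V3) : ℝ := (K.ρ x)⁻¹

/-- The point `(ι(x), grad ι(x), η(x))` at which `φ` and its partial
derivatives are evaluated. -/
def pt (x : V3) : ℝ × V3 × ℝ := (K.ι x, fun i => pd i K.ι x, K.η x)

/-- `∂_ιφ` evaluated along the fields. -/
def dφι (x : V3) : ℝ := fderiv ℝ K.φ (K.pt x) (1, 0, 0)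

/-- `∂_gφ` (vector of partial derivatives of `φ` w.r.t. the gradient slot)
evaluated along the fields. -/
def dφg (x : V3) : V3 := fun j => fderiv ℝ K.φ (K.pt x) (0, Pi.single j 1, 0)

/-- Temperature `ϑ = ∂_ηφ` evaluated along the fields. -/
def temp (x : V3) : ℝ := fderiv ℝ K.φ (K.pt x) (0, 0, 1)

/-- Convective rate `ι̇ = v · grad ι`. -/
def ιdot (x : V3) : ℝ := ∑ j, K.v x j * pd j K.ι x

/-- `∂_ιχ` evaluated along the fields. -/
def dχι (x : V3) : ℝ := fderiv ℝ K.χ (K.ι x, K.ιdot x) (1, 0)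

/-- The field `Π : x ↦ ∂_ι̇χ(ι(x), ι̇(x))`. -/
def Pi' (x : V3) : ℝ := fderiv ℝ K.χ (K.ι x, K.ιdot x) (0, 1)

/-- `div(ρ ∂_gφ)`. -/
def divρg (x : V3) : ℝ := ∑ j, pd j (fun y => K.ρ y * K.dφg y j) x

/-- Kinetic pressure `p̌ = ρι (v·grad Π) − ∂_ιχ`. -/
def pcheck (x : V3) : ℝ :=
  K.ρ x * K.ι x * (∑ j, K.v x j * pd j K.Pi' x) - K.dχι x

/-- Pressure `p̄ = −ρι ∂_ιφ + ι div(ρ ∂_gφ) − p̌`. -/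
def pbar (x : V3) : ℝ :=
  -(K.ρ x * K.ι x * K.dφι x) + K.ι x * K.divρg x - K.pcheck x

/-- Specific enthalpy `ξ = φ − ι ∂_ιφ − ∂_gφ · grad ι`. -/
def ξ (x : V3) : ℝ :=
  K.φ (K.pt x) - K.ι x * K.dφι x - ∑ j, K.dφg x j * pd j K.ι x

/-- Total enthalpy `h = (1/2)|v|² + ξ`. -/
def htot (x : V3) : ℝ := (1 / 2) * (∑ k, (K.v x k) ^ 2) + K.ξ x

/-- Korteweg stress `T^E = grad ι ⊗ ρ ∂_gφ`. -/
def TE (x : V3) (i j : Fin 3) : ℝ := pd i K.ι x * (K.ρ x * K.dφg x j)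

/-- Steady momentum balance `ρ (Dv)v = div T` with `T = −p̄ I − T^E`
(stated componentwise). -/
def MomentumBalance : Prop :=
  ∀ x ∈ K.B, ∀ i : Fin 3,
    K.ρ x * ∑ j, pd j (fun y => K.v y i) x * K.v x j
      = ∑ j, pd j (fun y => -(K.pbar y) * (if i = j then (1:ℝ) else 0) - K.TE y i j) x

end KortewegFluid

/-!
Lamb's identity writes `ω × v` as `(Dv)v - grad (|v|²/2)`. The momentum balance gives
`(Dv)v = -ι grad p̄ - ι div T^E`, and constancy of `h` turns `grad (|v|²/2)` into `-grad ξ`.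
By the chain rule for `φ` (whose `ϑ grad η` term vanishes as `η` is constant), `grad ξ` contains
the Hessian term `Hess ι ∂_gφ`; by the product rule and symmetry of second derivatives,
`ι div T^E` contains the same term times `ρι = 1`, so the two cancel, as do the `grad ∂_ιφ` terms
of `grad ξ` and `ι grad p̄`. Since `ρι = 1` also reduces `p̌` to `v·grad Π - ∂_ιχ`, what is left
is the claimed formula.
-/

open Filter Topology

lemma ContinuousLinearMap.apply_prod_pi_prod {n : Type*} [Fintype n] [DecidableEq n]
    (L : ℝ × (n → ℝ) × ℝ →L[ℝ] ℝ) (p : ℝ) (w : n → ℝ) (q : ℝ) :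
    L (p, w, q) = p * L (1, 0, 0) + ∑ j, w j * L (0, Pi.single j 1, 0) + q * L (0, 0, 1) := by
  have hw : (0, w, 0) = ∑ j, w j • ((0 : ℝ), (Pi.single j 1 : n → ℝ), (0 : ℝ)) := by
    ext k <;> simp [Prod.fst_sum, Prod.snd_sum, Pi.single_apply]
  have hpwq : ((p, w, q) : ℝ × (n → ℝ) × ℝ) = p • (1, 0, 0) + (0, w, 0) + q • (0, 0, 1) := by
    ext <;> simp
  rw [hpwq, hw, map_add, map_add, map_sum]
  simp only [map_smul, smul_eq_mul]

section PartialDerivatives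

variable {f g : V3 → ℝ} {x : V3} {i : Fin 3}

lemma pd_congr (h : f =ᶠ[𝓝 x] g) : pd i f x = pd i g x := by
  rw [pd, pd, h.fderiv_eq]

lemma IsOpen.pd_eq_zero {s : Set V3} (hs : IsOpen s) (hx : x ∈ s) (hf : ∀ y ∈ s, f y = f x) :
    pd i f x = 0 := by
  rw [pd_congr (g := fun _ => f x) (eventually_of_mem (hs.mem_nhds hx) hf)]
  simp [pd]

lemma pd_add (hf : DifferentiableAt ℝ f x) (hg : DifferentiableAt ℝ g x) :
    pd i (fun y => f y + g y) x = pd i f x + pd i g x := by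
  simp [pd, fderiv_fun_add hf hg]

lemma pd_neg : pd i (fun y => -f y) x = -pd i f x := by
  simp [pd, fderiv_fun_neg]

lemma pd_sub (hf : DifferentiableAt ℝ f x) (hg : DifferentiableAt ℝ g x) :
    pd i (fun y => f y - g y) x = pd i f x - pd i g x := by
  simp [pd, fderiv_fun_sub hf hg]

lemma pd_mul (hf : DifferentiableAt ℝ f x) (hg : DifferentiableAt ℝ g x) :
    pd i (fun y => f y * g y) x = f x * pd i g x + g x * pd i f x := by
  simp [pd, fderiv_fun_mul hf hg]

lemma pd_const_mul (hf : DifferentiableAt ℝ f x) (c : ℝ) :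
    pd i (fun y => c * f y) x = c * pd i f x := by
  simp [pd, fderiv_const_mul hf]

lemma pd_sum {α : Type*} (s : Finset α) {F : α → V3 → ℝ}
    (hF : ∀ j ∈ s, DifferentiableAt ℝ (F j) x) :
    pd i (fun y => ∑ j ∈ s, F j y) x = ∑ j ∈ s, pd i (F j) x := by
  simp [pd, fderiv_fun_sum hF]

lemma pd_apply {u : V3 → V3} (hu : DifferentiableAt ℝ u x) (j : Fin 3) :
    pd i (fun y => u y j) x = fderiv ℝ u x (Pi.single i 1) j := by
  rw [pd, fderiv_apply hu]
  rfl

lemma pd_half_sum_sq {u : V3 → V3} (hu : DifferentiableAt ℝ u x) :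
    pd i (fun y => 1 / 2 * ∑ k, u y k ^ 2) x = ∑ k, u x k * pd i (fun y => u y k) x := by
  have hu' : ∀ k, DifferentiableAt ℝ (fun y => u y k) x := differentiableAt_pi.mp hu
  rw [pd_const_mul (DifferentiableAt.fun_sum fun k _ => (hu' k).fun_pow 2),
    pd_sum _ fun k _ => (hu' k).fun_pow 2, Finset.mul_sum]
  refine Finset.sum_congr rfl fun k _ => ?_
  simp only [pow_two, pd_mul (hu' k) (hu' k)]
  ring

lemma pd_pd (hf : DifferentiableAt ℝ (fderiv ℝ f) x) (i j : Fin 3) :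
    pd i (pd j f) x = fderiv ℝ (fderiv ℝ f) x (Pi.single i 1) (Pi.single j 1) := by
  change fderiv ℝ (fun y => fderiv ℝ f y (Pi.single j 1)) x (Pi.single i 1) = _
  simp [fderiv_clm_apply hf (differentiableAt_const _)]

lemma pd_comm (hf : ContDiffAt ℝ 2 f x) (i j : Fin 3) : pd i (pd j f) x = pd j (pd i f) x := by
  have hf' : DifferentiableAt ℝ (fderiv ℝ f) x :=
    (hf.fderiv_right (m := 1) le_rfl).differentiableAt one_ne_zero
  rw [pd_pd hf', pd_pd hf', hf.isSymmSndFDerivAt (by simp)]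

lemma ContDiffOn.pd {s : Set V3} (hs : IsOpen s) (hf : ContDiffOn ℝ (⊤ : ℕ∞) f s) (j : Fin 3) :
    ContDiffOn ℝ (⊤ : ℕ∞) (pd j f) s :=
  (hf.fderiv_of_isOpen hs (m := (⊤ : ℕ∞)) (by decide)).clm_apply contDiffOn_const

lemma pd_comp_prod {φ : ℝ × V3 × ℝ → ℝ} {a c : V3 → ℝ} {b : V3 → V3}
    (hφ : DifferentiableAt ℝ φ (a x, b x, c x)) (ha : DifferentiableAt ℝ a x)
    (hb : DifferentiableAt ℝ b x) (hc : DifferentiableAt ℝ c x) :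
    pd i (fun y => φ (a y, b y, c y)) x
      = fderiv ℝ φ (a x, b x, c x) (1, 0, 0) * pd i a x
        + ∑ j, fderiv ℝ φ (a x, b x, c x) (0, Pi.single j 1, 0) * pd i (fun y => b y j) x
        + fderiv ℝ φ (a x, b x, c x) (0, 0, 1) * pd i c x := by
  have hchain : pd i (fun y => φ (a y, b y, c y)) x
      = fderiv ℝ φ (a x, b x, c x) (pd i a x, fderiv ℝ b x (Pi.single i 1), pd i c x) := by
    rw [pd, ← Function.comp_def φ, fderiv_comp x hφ (ha.prodMk (hb.prodMk hc)),
      ha.fderiv_prodMk (hb.prodMk hc), hb.fderiv_prodMk hc]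
    rfl
  rw [hchain, ContinuousLinearMap.apply_prod_pi_prod]
  simp only [pd_apply hb, mul_comm]

lemma cross_curl_apply (u : V3 → V3) (x : V3) (i : Fin 3) :
    cross (curl u x) (u x) i
      = ∑ j, pd j (fun y => u y i) x * u x j - ∑ j, u x j * pd i (fun y => u y j) x := by
  fin_cases i <;> simp [cross, curl, Fin.sum_univ_three] <;> ring

lemma sum_pd_neg_mul_ite_sub {p : V3 → ℝ} {T : Fin 3 → V3 → ℝ}
    (hp : DifferentiableAt ℝ p x) (hT : ∀ j, DifferentiableAt ℝ (T j) x) (i : Fin 3) :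
    ∑ j, pd j (fun y => -p y * (if i = j then 1 else 0) - T j y) x
      = -pd i p x - ∑ j, pd j (T j) x := by
  have hterm : ∀ j, pd j (fun y => -p y * (if i = j then 1 else 0) - T j y) x
      = -(if i = j then 1 else 0) * pd j p x - pd j (T j) x := by
    intro j
    rw [← pd_const_mul hp, ← pd_sub (hp.const_mul _) (hT j)]
    congr
    ext y
    ring
  rw [Finset.sum_congr rfl fun j _ => hterm j, Finset.sum_sub_distrib]
  simp

end PartialDerivatives

namespace KortewegFluid

variable (K : KortewegFluid) {x : V3}

lemma differentiableAt_of_contDiffOn {f : V3 → ℝ} (hf : ContDiffOn ℝ (⊤ : ℕ∞) f K.B)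
    (hx : x ∈ K.B) : DifferentiableAt ℝ f x :=
  (hf.contDiffAt (K.hB.mem_nhds hx)).differentiableAt (by decide)

lemma contDiffOn_ι : ContDiffOn ℝ (⊤ : ℕ∞) K.ι K.B :=
  K.hρ.inv fun x hx => (K.hρpos x hx).ne'

lemma contDiffOn_pd_ι (j : Fin 3) : ContDiffOn ℝ (⊤ : ℕ∞) (pd j K.ι) K.B :=
  K.contDiffOn_ι.pd K.hB j

lemma contDiffOn_v (j : Fin 3) : ContDiffOn ℝ (⊤ : ℕ∞) (fun y => K.v y j) K.B :=
  contDiffOn_pi.mp K.hv j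

lemma contDiffOn_pt : ContDiffOn ℝ (⊤ : ℕ∞) K.pt K.B :=
  K.contDiffOn_ι.prodMk ((contDiffOn_pi.mpr K.contDiffOn_pd_ι).prodMk K.hη)

lemma contDiffOn_fderiv_φ_pt (u : ℝ × V3 × ℝ) :
    ContDiffOn ℝ (⊤ : ℕ∞) (fun y => fderiv ℝ K.φ (K.pt y) u) K.B :=
  ((K.hφ.fderiv_right (m := (⊤ : ℕ∞)) (by decide)).comp_contDiffOn K.contDiffOn_pt).clm_apply
    contDiffOn_const

lemma contDiffOn_dφι : ContDiffOn ℝ (⊤ : ℕ∞) K.dφι K.B :=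
  K.contDiffOn_fderiv_φ_pt _

lemma contDiffOn_ιdot : ContDiffOn ℝ (⊤ : ℕ∞) K.ιdot K.B :=
  ContDiffOn.sum fun j _ => (K.contDiffOn_v j).mul (K.contDiffOn_pd_ι j)

lemma contDiffOn_fderiv_χ (u : ℝ × ℝ) :
    ContDiffOn ℝ (⊤ : ℕ∞) (fun y => fderiv ℝ K.χ (K.ι y, K.ιdot y) u) K.B :=
  ((K.hχ.fderiv_right (m := (⊤ : ℕ∞)) (by decide)).comp_contDiffOn
    (K.contDiffOn_ι.prodMk K.contDiffOn_ιdot)).clm_apply contDiffOn_const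

lemma contDiffOn_ρ_mul_dφg (j : Fin 3) :
    ContDiffOn ℝ (⊤ : ℕ∞) (fun y => K.ρ y * K.dφg y j) K.B :=
  K.hρ.mul (K.contDiffOn_fderiv_φ_pt _)

lemma contDiffOn_divρg : ContDiffOn ℝ (⊤ : ℕ∞) K.divρg K.B :=
  ContDiffOn.sum fun j _ => (K.contDiffOn_ρ_mul_dφg j).pd K.hB j

lemma contDiffOn_dφg_dot_grad_ι :
    ContDiffOn ℝ (⊤ : ℕ∞) (fun y => ∑ j, K.dφg y j * pd j K.ι y) K.B :=
  ContDiffOn.sum fun j _ => (K.contDiffOn_fderiv_φ_pt _).mul (K.contDiffOn_pd_ι j)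

lemma contDiffOn_v_dot_grad_Pi' :
    ContDiffOn ℝ (⊤ : ℕ∞) (fun y => ∑ j, K.v y j * pd j K.Pi' y) K.B :=
  ContDiffOn.sum fun j _ => (K.contDiffOn_v j).mul ((K.contDiffOn_fderiv_χ _).pd K.hB j)

lemma contDiffOn_kinetic :
    ContDiffOn ℝ (⊤ : ℕ∞) (fun y => (∑ j, K.v y j * pd j K.Pi' y) - K.dχι y) K.B :=
  K.contDiffOn_v_dot_grad_Pi'.sub (K.contDiffOn_fderiv_χ _)

lemma contDiffOn_pbar : ContDiffOn ℝ (⊤ : ℕ∞) K.pbar K.B :=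
  (((K.hρ.mul K.contDiffOn_ι).mul K.contDiffOn_dφι).neg.add
    (K.contDiffOn_ι.mul K.contDiffOn_divρg)).sub
    (((K.hρ.mul K.contDiffOn_ι).mul K.contDiffOn_v_dot_grad_Pi').sub (K.contDiffOn_fderiv_χ _))

lemma contDiffOn_TE (i j : Fin 3) : ContDiffOn ℝ (⊤ : ℕ∞) (fun y => K.TE y i j) K.B :=
  (K.contDiffOn_pd_ι i).mul (K.contDiffOn_ρ_mul_dφg j)

lemma contDiffOn_ξ : ContDiffOn ℝ (⊤ : ℕ∞) K.ξ K.B :=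
  ((K.hφ.comp_contDiffOn K.contDiffOn_pt).sub
    (K.contDiffOn_ι.mul K.contDiffOn_dφι)).sub K.contDiffOn_dφg_dot_grad_ι

lemma MomentumBalance.convective_eq {K : KortewegFluid} (hbal : K.MomentumBalance)
    (hx : x ∈ K.B) (i : Fin 3) :
    ∑ j, pd j (fun y => K.v y i) x * K.v x j
      = K.ι x * (-pd i K.pbar x - ∑ j, pd j (fun y => K.TE y i j) x) := by
  rw [← sum_pd_neg_mul_ite_sub (K.differentiableAt_of_contDiffOn K.contDiffOn_pbar hx)
      (fun j => K.differentiableAt_of_contDiffOn (K.contDiffOn_TE i j) hx),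
    ← hbal x hx i, ← mul_assoc, ι, inv_mul_cancel₀ (K.hρpos x hx).ne', one_mul]

lemma sum_pd_TE (hx : x ∈ K.B) (i : Fin 3) :
    ∑ j, pd j (fun y => K.TE y i j) x
      = pd i K.ι x * K.divρg x + K.ρ x * ∑ j, K.dφg x j * pd i (pd j K.ι) x := by
  have hterm : ∀ j, pd j (fun y => K.TE y i j) x
      = pd i K.ι x * pd j (fun y => K.ρ y * K.dφg y j) x
        + K.ρ x * (K.dφg x j * pd i (pd j K.ι) x) := by
    intro j
    rw [show (fun y => K.TE y i j) = fun y => pd i K.ι y * (K.ρ y * K.dφg y j) from rfl,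
      pd_mul (K.differentiableAt_of_contDiffOn (K.contDiffOn_pd_ι i) hx)
        (K.differentiableAt_of_contDiffOn (K.contDiffOn_ρ_mul_dφg j) hx),
      pd_comm ((K.contDiffOn_ι.contDiffAt (K.hB.mem_nhds hx)).of_le (by decide)) i j]
    ring
  rw [Finset.sum_congr rfl fun j _ => hterm j, Finset.sum_add_distrib, ← Finset.mul_sum,
    ← Finset.mul_sum, divρg]

lemma pbar_eventuallyEq (hx : x ∈ K.B) :
    K.pbar =ᶠ[𝓝 x]
      fun y => -K.dφι y + K.ι y * K.divρg y - ((∑ j, K.v y j * pd j K.Pi' y) - K.dχι y) := by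
  filter_upwards [K.hB.mem_nhds hx] with y hy
  simp [pbar, pcheck, ι, mul_inv_cancel₀ (K.hρpos y hy).ne']

lemma pd_pbar (hx : x ∈ K.B) (i : Fin 3) :
    pd i K.pbar x
      = -pd i K.dφι x + (K.ι x * pd i K.divρg x + K.divρg x * pd i K.ι x)
        - pd i (fun y => (∑ j, K.v y j * pd j K.Pi' y) - K.dχι y) x := by
  have hι := K.differentiableAt_of_contDiffOn K.contDiffOn_ι hx
  have hdφι := K.differentiableAt_of_contDiffOn K.contDiffOn_dφι hx
  have hdiv := K.differentiableAt_of_contDiffOn K.contDiffOn_divρg hx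
  have hkin := K.differentiableAt_of_contDiffOn K.contDiffOn_kinetic hx
  rw [pd_congr (K.pbar_eventuallyEq hx), pd_sub (hdφι.fun_neg.fun_add (hι.fun_mul hdiv)) hkin,
    pd_add hdφι.fun_neg (hι.fun_mul hdiv), pd_neg, pd_mul hι hdiv]

lemma pd_φ_pt (hx : x ∈ K.B) (i : Fin 3) :
    pd i (fun y => K.φ (K.pt y)) x
      = K.dφι x * pd i K.ι x + ∑ j, K.dφg x j * pd i (pd j K.ι) x
        + K.temp x * pd i K.η x :=
  pd_comp_prod ((K.hφ.differentiable (by decide)) _)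
    (K.differentiableAt_of_contDiffOn K.contDiffOn_ι hx)
    (differentiableAt_pi.mpr fun j => K.differentiableAt_of_contDiffOn (K.contDiffOn_pd_ι j) hx)
    (K.differentiableAt_of_contDiffOn K.hη hx)

lemma pd_ξ (hx : x ∈ K.B) (i : Fin 3) :
    pd i K.ξ x
      = ∑ j, K.dφg x j * pd i (pd j K.ι) x + K.temp x * pd i K.η x - K.ι x * pd i K.dφι x
        - pd i (fun y => ∑ j, K.dφg y j * pd j K.ι y) x := by
  have hφpt : DifferentiableAt ℝ (fun y => K.φ (K.pt y)) x :=
    K.differentiableAt_of_contDiffOn (K.hφ.comp_contDiffOn K.contDiffOn_pt) hx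
  have hι := K.differentiableAt_of_contDiffOn K.contDiffOn_ι hx
  have hdφι := K.differentiableAt_of_contDiffOn K.contDiffOn_dφι hx
  have hdot := K.differentiableAt_of_contDiffOn K.contDiffOn_dφg_dot_grad_ι hx
  rw [show K.ξ = fun y => K.φ (K.pt y) - K.ι y * K.dφι y - ∑ j, K.dφg y j * pd j K.ι y from rfl,
    pd_sub (hφpt.fun_sub (hι.fun_mul hdφι)) hdot, pd_sub hφpt (hι.fun_mul hdφι), pd_mul hι hdφι,
    K.pd_φ_pt hx]
  ring

lemma pd_htot (hx : x ∈ K.B) (i : Fin 3) :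
    pd i K.htot x = ∑ k, K.v x k * pd i (fun y => K.v y k) x + pd i K.ξ x := by
  have hv : DifferentiableAt ℝ K.v x :=
    differentiableAt_pi.mpr fun k => K.differentiableAt_of_contDiffOn (K.contDiffOn_v k) hx
  have hsq : DifferentiableAt ℝ (fun y => 1 / 2 * ∑ k, K.v y k ^ 2) x := by fun_prop
  rw [show K.htot = fun y => 1 / 2 * ∑ k, K.v y k ^ 2 + K.ξ y from rfl,
    pd_add hsq (K.differentiableAt_of_contDiffOn K.contDiffOn_ξ hx), pd_half_sum_sq hv]

end KortewegFluid

/-- Corollary 2, substructural generation of vorticity: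
for a steady flow of a Korteweg fluid satisfying the steady momentum balance,
if the entropy `η` and the total enthalpy `h` are constant throughout `B`,
then at every point of `B` (componentwise):
`ω × v = −grad(ι² div(ρ ∂_gφ) + ∂_gφ·grad ι) + ι grad(v·grad Π − ∂_ιχ)`. -/
theorem korteweg_substructural_generation_of_vorticity (K : KortewegFluid)
    (hbal : K.MomentumBalance)
    (hη : ∀ x ∈ K.B, ∀ y ∈ K.B, K.η x = K.η y)
    (hh : ∀ x ∈ K.B, ∀ y ∈ K.B, K.htot x = K.htot y) :
    ∀ x ∈ K.B, ∀ i : Fin 3,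
      cross (curl K.v x) (K.v x) i
        = -pd i (fun y => (K.ι y) ^ 2 * K.divρg y + ∑ j, K.dφg y j * pd j K.ι y) x
          + K.ι x * pd i (fun y => (∑ j, K.v y j * pd j K.Pi' y) - K.dχι y) x := by
  intro x hx i
  have hι := K.differentiableAt_of_contDiffOn K.contDiffOn_ι hx
  have hdiv := K.differentiableAt_of_contDiffOn K.contDiffOn_divρg hx
  have hdot := K.differentiableAt_of_contDiffOn K.contDiffOn_dφg_dot_grad_ι hx
  have hιρ : K.ι x * K.ρ x = 1 := inv_mul_cancel₀ (K.hρpos x hx).ne'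
  have hkin : ∑ k, K.v x k * pd i (fun y => K.v y k) x = -pd i K.ξ x := by
    linarith [K.pd_htot hx i, K.hB.pd_eq_zero hx (i := i) fun y hy => hh y hy x hx]
  have hrhs : pd i (fun y => K.ι y ^ 2 * K.divρg y + ∑ j, K.dφg y j * pd j K.ι y) x
      = K.ι x * (K.ι x * pd i K.divρg x + K.divρg x * pd i K.ι x)
        + K.ι x * K.divρg x * pd i K.ι x + pd i (fun y => ∑ j, K.dφg y j * pd j K.ι y) x := by
    simp only [pow_two, mul_assoc]
    rw [pd_add (hι.fun_mul (hι.fun_mul hdiv)) hdot, pd_mul hι (hι.fun_mul hdiv), pd_mul hι hdiv]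
    ring
  rw [cross_curl_apply, hbal.convective_eq hx i, hkin, K.sum_pd_TE hx i, K.pd_pbar hx i,
    K.pd_ξ hx i, K.hB.pd_eq_zero hx fun y hy => hη y hy x hx, hrhs]
  linear_combination (-∑ j, K.dφg x j * pd i (pd j K.ι) x) * hιρ
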